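/- arXiv:math/0609699 — 4 statements merged into one kernel-verified Lean document; each statement's English description precedes it below -/
import Mathlib

section
/- Let G be a finite p-group with a non-trivial proper subgroup H, and k a field of characteristic p. Let θ = ∑_g α_g g be a central element of kG with ∑_{h∈H} α_h ≠ 0. Then multiplication by θ on the induced module k_H↑^G = kG ⊗_{kH} k is not stably trivial, i.e., it does not factor through a projective kG-module. -/
/-!
Write `e ∈ k[G/H] = k_H↑^G` for the trivial coset and `ε` for the coefficient of `e`: these are
the unit `k_H → (k_H↑^G)↓_H` and the counit `(k_H↑^G)↓_H → k_H` of the induction–restriction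
adjunction (`IndTriv.unit`, `IndTriv.counit`), and `ε (θ • e) = ∑_{h ∈ H} α_h`. If
multiplication by `θ` factors through a free module `F`, the image of the `H`-fixed vector `e` in
`F` is `H`-fixed, hence equal to `N_H • z` with `N_H = ∑_{h ∈ H} h`, because `kG` is free over
`kH`. So `ε (θ • e) = ε (N_H • w) = |H| ε w = 0`, as `H` is a non-trivial `p`-group.
-/

/-- A map is stably trivial if it factors through a finitely generated free module. -/
def StablyTrivial (A : Type) [Ring A] {M N : Type} [AddCommGroup M] [AddCommGroup N]
    [Module A M] [Module A N] (f : M →ₗ[A] N) : Prop :=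
  ∃ (t : ℕ) (g : M →ₗ[A] (Fin t → A)) (h : (Fin t → A) →ₗ[A] N), h.comp g = f

/-- Left multiplication by a central element, as a linear endomorphism. -/
def mulBy (A M : Type) [Ring A] [AddCommGroup M] [Module A M]
    (θ : A) (hθ : ∀ b : A, θ * b = b * θ) : M →ₗ[A] M where
  toFun x := θ • x
  map_add' := smul_add θ
  map_smul' a x := by
    simp only [RingHom.id_apply]
    rw [← mul_smul, hθ a, mul_smul]

/-- The induced module `k_H↑^G = kG ⊗_{kH} k`, realized as the permutation
module `k[G/H]`. -/
noncomputable def IndTriv (k G : Type) [Field k] [Group G] (H : Subgroup G) : Type :=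
  (Representation.ofMulAction k G (G ⧸ H)).asModule

noncomputable instance (k G : Type) [Field k] [Group G] (H : Subgroup G) :
    AddCommGroup (IndTriv k G H) :=
  inferInstanceAs (AddCommGroup (MonoidAlgebra k (G ⧸ H)))

noncomputable instance (k G : Type) [Field k] [Group G] (H : Subgroup G) :
    Module (MonoidAlgebra k G) (IndTriv k G H) :=
  inferInstanceAs (Module (MonoidAlgebra k G)
    (Representation.ofMulAction k G (G ⧸ H)).asModule)

open MonoidAlgebra

namespace MonoidAlgebra

variable (k : Type*) {G : Type*} [Semiring k] [Group G]

noncomputable def subgroupNorm (H : Subgroup G) [Fintype H] : MonoidAlgebra k G :=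
  ∑ h : H, single (h : G) 1

variable {k}

theorem exists_subgroupNorm_mul_eq (H : Subgroup G) [Fintype H] {y : MonoidAlgebra k G}
    (hy : ∀ h : H, single (h : G) (1 : k) * y = y) : ∃ z, subgroupNorm k H * z = y := by
  classical
  obtain ⟨T, hT, -⟩ := Subgroup.exists_isComplement_right H 1
  have hy_coeff : ∀ (h : H) (g : G), y.coeff ((h : G)⁻¹ * g) = y.coeff g := fun h g => by
    conv_rhs => rw [← hy h]
    rw [coeff_single_mul_apply, one_mul]
  -- `k[G]` is free over `k[H]` on a right transversal `T`; take the part of `y` supported on `T`.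
  refine ⟨ofCoeff (y.coeff.filter (· ∈ T)), ?_⟩
  ext g
  obtain ⟨h₀, hh₀, hh₀_unique⟩ := Subgroup.isComplement_iff_existsUnique_inv_mul_mem.mp hT g
  rw [subgroupNorm, Finset.sum_mul, coeff_sum, Finsupp.finsetSum_apply,
    Finset.sum_eq_single (⟨h₀, h₀.2⟩ : H) (fun h _ hne => ?_) (by simp)]
  · simp [Finsupp.filter_apply_pos _ _ hh₀, hy_coeff]
  · simp [Finsupp.filter_apply_neg _ _ (mt (hh₀_unique h) hne)]

theorem exists_subgroupNorm_smul_eq {ι : Type*} (H : Subgroup G) [Fintype H]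
    {y : ι → MonoidAlgebra k G} (hy : ∀ h : H, single (h : G) (1 : k) • y = y) :
    ∃ z, subgroupNorm k H • z = y := by
  choose z hz using fun i => exists_subgroupNorm_mul_eq H fun h => congr_fun (hy h) i
  exact ⟨z, funext hz⟩

end MonoidAlgebra

theorem IsPGroup.natCast_card_eq_zero {p : ℕ} [Fact p.Prime] {G R : Type*} [Group G] [Finite G]
    [Nontrivial G] [AddMonoidWithOne R] [CharP R p] (hG : IsPGroup p G) : (Nat.card G : R) = 0 :=
  (CharP.cast_eq_zero_iff R p _).mpr <|
    hG.card_eq_or_dvd.resolve_left Finite.one_lt_card.ne'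

namespace IndTriv

variable {k G : Type} [Field k] [Group G] {H : Subgroup G}

noncomputable def unit : IndTriv k G H :=
  (single (QuotientGroup.mk 1 : G ⧸ H) 1 : MonoidAlgebra k (G ⧸ H))

noncomputable def counit : IndTriv k G H →+ k :=
  (Finsupp.applyAddHom (QuotientGroup.mk 1 : G ⧸ H)).comp <|
    coeffAddEquiv.toAddMonoidHom.comp
      (Representation.asModuleEquiv (Representation.ofMulAction k G (G ⧸ H))).toAddMonoidHom

theorem smul_mk_one_eq_iff (g : G) :
    g • (QuotientGroup.mk 1 : G ⧸ H) = QuotientGroup.mk 1 ↔ g ∈ H := by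
  rw [← MulAction.mem_stabilizer_iff, MulAction.stabilizer_quotient]

theorem asModuleEquiv_single_smul (g : G) (a : k) (v : IndTriv k G H) :
    Representation.asModuleEquiv (Representation.ofMulAction k G (G ⧸ H)) (single g a • v) =
      a • Representation.ofMulAction k G (G ⧸ H) g (Representation.asModuleEquiv _ v) :=
  LinearMap.congr_fun (Representation.asAlgebraHom_single _ g a) (Representation.asModuleEquiv _ v)

theorem single_smul_unit_of_mem {g : G} (hg : g ∈ H) :
    single g (1 : k) • (unit : IndTriv k G H) = unit := by
  apply (Representation.asModuleEquiv (Representation.ofMulAction k G (G ⧸ H))).injective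
  rw [asModuleEquiv_single_smul, one_smul]
  show Representation.ofMulAction k G (G ⧸ H) g (single _ 1) = single _ 1
  rw [Representation.ofMulAction_single, (smul_mk_one_eq_iff g).mpr hg]

theorem counit_single_smul_of_mem {g : G} (hg : g ∈ H) (v : IndTriv k G H) :
    counit (single g (1 : k) • v) = counit v := by
  show (Representation.asModuleEquiv _ (single g (1 : k) • v)).coeff _ = _
  rw [asModuleEquiv_single_smul, one_smul, Representation.coeff_ofMulAction,
    (smul_mk_one_eq_iff _).mpr (H.inv_mem hg)]
  rfl

theorem counit_subgroupNorm_smul [Fintype H] (v : IndTriv k G H) :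
    counit (subgroupNorm k H • v) = Nat.card H * counit v := by
  rw [subgroupNorm, Finset.sum_smul, map_sum]
  simp only [fun h : H => counit_single_smul_of_mem h.2 v, Finset.sum_const, Finset.card_univ,
    Nat.card_eq_fintype_card, nsmul_eq_mul]

theorem counit_smul_unit [Fintype H] (θ : MonoidAlgebra k G) :
    counit (θ • (unit : IndTriv k G H)) = ∑ h : H, θ.coeff h := by
  classical
  induction θ using MonoidAlgebra.induction_linear with
  | zero => simp
  | add x y hx hy => simp [add_smul, hx, hy, Finset.sum_add_distrib]
  | single g a =>
    show (Representation.asModuleEquiv _ (single g a • (unit : IndTriv k G H))).coeff _ = _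
    rw [asModuleEquiv_single_smul]
    show (a • Representation.ofMulAction k G (G ⧸ H) g (single _ 1)).coeff _ = _
    rw [Representation.ofMulAction_single]
    simp only [coeff_smul, coeff_single, Finsupp.smul_apply, Finsupp.single_apply,
      smul_mk_one_eq_iff, smul_eq_mul, mul_ite, mul_one, mul_zero]
    by_cases hg : g ∈ H
    · rw [if_pos hg, Finset.sum_eq_single ⟨g, hg⟩
        (fun h _ hne => if_neg fun hgh => hne (Subtype.ext hgh.symm)) (by simp), if_pos rfl]
    · rw [if_neg hg, Finset.sum_eq_zero fun (h : H) _ =>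
        if_neg fun (hgh : g = h) => hg (hgh ▸ h.prop)]

end IndTriv

theorem stmt5_general (p : ℕ) [Fact p.Prime] (k : Type) [Field k] [CharP k p]
    (G : Type) [Group G] (hG : IsPGroup p G)
    (H : Subgroup G) [Fintype H] (hH1 : H ≠ ⊥)
    (θ : MonoidAlgebra k G) (hθc : ∀ b : MonoidAlgebra k G, θ * b = b * θ)
    (hsum : (∑ h : H, θ.coeff (h : G)) ≠ 0) :
    ¬ StablyTrivial (MonoidAlgebra k G)
        (mulBy (MonoidAlgebra k G) (IndTriv k G H) θ hθc) := by
  rintro ⟨t, f, g, hgf⟩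
  have := (Subgroup.nontrivial_iff_ne_bot H).mpr hH1
  obtain ⟨z, hz⟩ := exists_subgroupNorm_smul_eq H (y := f IndTriv.unit) fun h => by
    rw [← map_smul, IndTriv.single_smul_unit_of_mem h.2]
  apply hsum
  calc ∑ h : H, θ.coeff h = IndTriv.counit (θ • (IndTriv.unit : IndTriv k G H)) :=
        (IndTriv.counit_smul_unit θ).symm
    _ = IndTriv.counit (g (subgroupNorm k H • z)) := by rw [hz, ← LinearMap.comp_apply, hgf]; rfl
    _ = Nat.card H * IndTriv.counit (g z) := by rw [map_smul, IndTriv.counit_subgroupNorm_smul]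
    _ = 0 := by rw [(hG.to_subgroup H).natCast_card_eq_zero, zero_mul]

/-- if `θ = ∑ α_g g` is central in `kG` and `∑_{h ∈ H} α_h ≠ 0` for a
non-trivial proper subgroup `H` of the finite `p`-group `G`, then multiplication by `θ`
on `k_H↑^G` does not factor through a projective module. -/
theorem stmt5 (p : ℕ) [Fact p.Prime] (k : Type) [Field k] [CharP k p]
    (G : Type) [Group G] [Fintype G] (hG : IsPGroup p G)
    (H : Subgroup G) [Fintype H] (hH1 : H ≠ ⊥) (hH2 : H ≠ ⊤)
    (θ : MonoidAlgebra k G) (hθc : ∀ b : MonoidAlgebra k G, θ * b = b * θ)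
    (hsum : (∑ h : H, θ.coeff (h : G)) ≠ 0) :
    ¬ StablyTrivial (MonoidAlgebra k G)
        (mulBy (MonoidAlgebra k G) (IndTriv k G H) θ hθc) :=
  stmt5_general p k G hG H hH1 θ hθc hsum
end

section
/- Let G be a finite p-group and k a field of characteristic p with nilpotency index m of J(kG) (the least m with J(kG)^m = 0). Then for every projective-free kG-module M, one has J(kG)^{m-1} M = 0; i.e., the radical length of M is strictly less than m. -/
/-- A module is projective-free if it has no nonzero projective direct summand. -/
def ProjectiveFree (A M : Type) [Ring A] [AddCommGroup M] [Module A M] : Prop :=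
  ∀ N N' : Submodule A M, IsCompl N N' → Module.Projective A N → N = ⊥

/-- The submodule `J • N` spanned by products `a • n` with `a ∈ J`, `n ∈ N`. -/
def idealSmul (A M : Type) [Ring A] [AddCommGroup M] [Module A M]
    (J : Ideal A) (N : Submodule A M) : Submodule A M :=
  Submodule.span A {x | ∃ a ∈ J, ∃ n ∈ N, x = a • n}

/-- The radical series `Rad^i M = J^i M`.  Applied to `M = A` itself this gives the
powers `J^i` of the ideal `J`. -/
def radSeries (A M : Type) [Ring A] [AddCommGroup M] [Module A M] (J : Ideal A) :
    ℕ → Submodule A M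
  | 0 => ⊤
  | (i+1) => idealSmul A M J (radSeries A M J i)

/-!
Every simple `kG`-module is generated by a nonzero `G`-fixed vector (the `p`-group `G` fixes a
nonzero vector of any nonzero `𝔽_p`-space it acts on), so `G` acts trivially on it. Hence every
`g - 1`, and with them the augmentation ideal, lies in `J = J(kG)`, and an element of `kG` is a
unit as soon as its augmentation is. If `J ^ m = 0`, each `a ∈ J ^ (m - 1)` satisfies
`(g - 1) a = 0` for all `g`, so `a` is a scalar multiple of the norm element `N = ∑ g`.
Finally `N` kills a projective-free `M`: if `N x ≠ 0`, choose `f : M →ₗ[k] k` with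
`f (N x) ≠ 0`; then `y ↦ ∑ g⁻¹ f (g y)` is `kG`-linear and sends `x` to an element of
augmentation `f (N x)`, a unit, so `a ↦ a x` splits and `kG x ≅ kG` is a nonzero projective
summand of `M`.
-/

open MonoidAlgebra

section RadicalSeries

variable {A M : Type} [Ring A] [AddCommGroup M] [Module A M]

theorem idealSmul_eq_smul (J : Ideal A) (N : Submodule A M) : idealSmul A M J N = J • N := by
  refine le_antisymm (Submodule.span_le.2 ?_) (Submodule.smul_le.2 fun a ha n hn => ?_)
  · rintro _ ⟨a, ha, n, hn, rfl⟩
    exact Submodule.smul_mem_smul ha hn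
  · exact Submodule.subset_span ⟨a, ha, n, hn, rfl⟩

theorem radSeries_eq_smul_top (J : Ideal A) :
    ∀ i, radSeries A M J i = radSeries A A J i • ⊤
  | 0 => by rw [radSeries, radSeries, Submodule.top_smul]
  | i + 1 => by
    rw [radSeries, radSeries, radSeries_eq_smul_top J i, idealSmul_eq_smul, idealSmul_eq_smul,
      Submodule.smul_assoc]

end RadicalSeries

theorem isUnit_of_sub_one_mem_jacobson {R : Type*} [Ring R] {u : R}
    (hu : u - 1 ∈ Ring.jacobson R) : IsUnit u := by
  rw [← Ideal.jacobson_bot] at hu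
  obtain ⟨s, hs⟩ := Ideal.exists_mul_sub_mem_of_sub_one_mem_jacobson u hu
  rw [Ideal.mem_bot, sub_eq_zero] at hs
  have hs1 : s - 1 ∈ Ideal.jacobson (⊥ : Ideal R) := by
    have : s - 1 = -(s * (u - 1)) := by rw [mul_sub, hs, mul_one, neg_sub]
    exact this ▸ (Ideal.neg_mem_iff _).2 (Ideal.mul_mem_left _ s hu)
  obtain ⟨t, ht⟩ := Ideal.exists_mul_sub_mem_of_sub_one_mem_jacobson s hs1
  rw [Ideal.mem_bot, sub_eq_zero] at ht
  -- `t = t * (s * u) = u`, so `s` is also a right inverse of `u`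
  have htu : t = u := by rw [← mul_one t, ← hs, ← mul_assoc, ht, one_mul]
  exact ⟨⟨u, s, htu ▸ ht, hs⟩, rfl⟩

theorem ProjectiveFree.eq_zero_of_isUnit_apply {A M : Type} [Ring A] [AddCommGroup M]
    [Module A M] (hM : ProjectiveFree A M) (ψ : M →ₗ[A] A) {x : M} (hx : IsUnit (ψ x)) :
    x = 0 := by
  obtain ⟨u, hu⟩ := hx
  let φ := LinearMap.toSpanSingleton A M x
  let ρ := LinearMap.toSpanSingleton A A ↑u⁻¹ ∘ₗ ψ
  have hρφ (a : A) : ρ (φ a) = a := by simp [ρ, φ, ← hu]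
  let π : M →ₗ[A] LinearMap.range φ :=
    (φ ∘ₗ ρ).codRestrict _ fun y => LinearMap.mem_range_self φ (ρ y)
  have hπ : ∀ z : LinearMap.range φ, π z = z := by
    rintro ⟨_, a, rfl⟩
    exact Subtype.ext (congrArg φ (hρφ a))
  have : Module.Projective A (LinearMap.range φ) :=
    .of_equiv' (LinearEquiv.ofInjective φ (Function.LeftInverse.injective hρφ))
  have hrange := hM _ _ (LinearMap.isCompl_of_proj hπ) this
  simpa [φ, hrange] using LinearMap.mem_range_self φ 1

theorem IsPGroup.exists_fixed_ne_zero {p : ℕ} [Fact p.Prime] {G V : Type*} [Group G] [Finite G]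
    (hG : IsPGroup p G) [AddCommGroup V] [DistribMulAction G V] (hV : ∀ v : V, p • v = 0)
    {t : V} (ht : t ≠ 0) : ∃ v : V, v ≠ 0 ∧ ∀ g : G, g • v = v := by
  have : NeZero p := ⟨(Fact.out : p.Prime).ne_zero⟩
  have : Module (ZMod p) V := AddCommGroup.zmodModule hV
  -- the finite `𝔽_p`-span of the orbit of `t` is a `G`-set of `p`-power order fixing `0`
  let W : Submodule (ZMod p) V := Submodule.span (ZMod p) (Set.range fun g : G => g • t)
  have hW (g : G) {w : V} (hw : w ∈ W) : (g • w : V) ∈ W := by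
    refine Submodule.span_mono ?_ <| Submodule.apply_mem_span_image_of_mem_span
      ((DistribSMul.toAddMonoidHom V g).toZModLinearMap p) hw
    rintro _ ⟨_, ⟨h, rfl⟩, rfl⟩
    exact ⟨g * h, mul_smul g h t⟩
  let W' : SubMulAction G V := ⟨W, hW⟩
  have htW : t ∈ W := Submodule.subset_span ⟨1, one_smul G t⟩
  have : Nontrivial W := ⟨⟨⟨t, htW⟩, 0, by simpa [Subtype.ext_iff] using ht⟩⟩
  have : Module.Finite (ZMod p) W := .span_of_finite _ (Set.finite_range _)
  have : Finite W := Module.finite_of_finite (ZMod p)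
  have hcard : p ∣ Nat.card W' := by
    have := Fintype.ofFinite W
    change p ∣ Nat.card W
    rw [Nat.card_eq_fintype_card, Module.card_eq_pow_finrank (K := ZMod p), ZMod.card]
    exact dvd_pow_self p Module.finrank_pos.ne'
  have : Finite W' := ‹Finite W›
  obtain ⟨v, hv, hv0⟩ := hG.exists_fixed_point_of_prime_dvd_card_of_fixed_point W' hcard
    (a := ⟨0, W.zero_mem⟩) fun g => Subtype.ext (smul_zero g)
  exact ⟨v, fun h => hv0 (Subtype.ext h.symm), fun g => congrArg Subtype.val (hv g)⟩

namespace MonoidAlgebra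

section Monoid

variable (k G : Type*) [CommSemiring k] [Monoid G]

noncomputable abbrev augmentation : k[G] →ₐ[k] k := lift k k G 1

noncomputable def normElement [Fintype G] : k[G] := ∑ g : G, of k G g

variable {k G}

theorem coeff_normElement [Fintype G] (g : G) : (normElement k G).coeff g = 1 := by
  classical
  simp [normElement, coeff_sum, coeff_single, Finsupp.single_apply]

theorem of_mul_smul_eq_smul_of_forall_of_smul_eq {S : Type*} [AddCommMonoid S] [Module k[G] S]
    {s : S} (hs : ∀ g, of k G g • s = s) (g : G) (b : k[G]) : (of k G g * b) • s = b • s := by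
  induction b using MonoidAlgebra.induction_on with
  | of h => rw [← map_mul, hs, hs]
  | add a b ha hb => rw [mul_add, add_smul, add_smul, ha, hb]
  | smul c a ha => rw [mul_smul_comm, Algebra.smul_def, Algebra.smul_def, mul_smul, ha, mul_smul]

end Monoid

section Group

variable {k G : Type*} [CommRing k] [Group G]

theorem eq_coeff_one_smul_normElement [Fintype G] {a : k[G]} (ha : ∀ g, of k G g * a = a) :
    a = a.coeff 1 • normElement k G := by
  ext g
  have := congrArg (coeff · g) (ha g)
  simp only [of_apply, coeff_single_mul_apply, one_mul, inv_mul_cancel] at this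
  rw [coeff_smul_apply, coeff_normElement, smul_eq_mul, mul_one, this]

theorem of_sub_one_mem_jacobson (p : ℕ) [Fact p.Prime] [CharP k p] [Finite G]
    (hG : IsPGroup p G) (g : G) : of k G g - 1 ∈ Ring.jacobson k[G] := by
  rw [Ring.jacobson_eq_sInf_isMaximal, Submodule.mem_sInf]
  intro L (hL : Ideal.IsMaximal L)
  have : IsSimpleModule k[G] (k[G] ⧸ L) := isSimpleModule_iff_isCoatom.2 hL.out
  let _ : DistribMulAction G (k[G] ⧸ L) := .compHom _ (of k G)
  have hp (v : k[G] ⧸ L) : p • v = 0 := by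
    rw [← Nat.cast_smul_eq_nsmul k[G], ← map_natCast (algebraMap k k[G]), CharP.cast_eq_zero,
      map_zero, zero_smul]
  have h1 : (Submodule.Quotient.mk 1 : k[G] ⧸ L) ≠ 0 := by
    rw [Ne, Submodule.Quotient.mk_eq_zero, ← Ideal.eq_top_iff_one]
    exact hL.ne_top
  -- a nonzero `G`-fixed vector generates the simple module `kG ⧸ L`, so `G` acts trivially on it
  obtain ⟨s, hs0, hs⟩ := hG.exists_fixed_ne_zero hp h1
  obtain ⟨a, ha⟩ := Submodule.mem_span_singleton.1
    ((IsSimpleModule.span_singleton_eq_top k[G] hs0).symm ▸ Submodule.mem_top :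
      (Submodule.Quotient.mk 1 : k[G] ⧸ L) ∈ Submodule.span k[G] {s})
  have h2 : (of k G g - 1) • (Submodule.Quotient.mk 1 : k[G] ⧸ L) = 0 := by
    rw [← ha, ← mul_smul, sub_mul, one_mul, sub_smul, of_mul_smul_eq_smul_of_forall_of_smul_eq hs,
      sub_self]
  rwa [← Submodule.Quotient.mk_smul, smul_eq_mul, mul_one, Submodule.Quotient.mk_eq_zero] at h2

theorem sub_algebraMap_augmentation_mem_jacobson (p : ℕ) [Fact p.Prime] [CharP k p] [Finite G]
    (hG : IsPGroup p G) (b : k[G]) :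
    b - algebraMap k k[G] (augmentation k G b) ∈ Ring.jacobson k[G] := by
  induction b using MonoidAlgebra.induction_on with
  | of g => simpa only [lift_of, MonoidHom.one_apply, map_one] using of_sub_one_mem_jacobson p hG g
  | add a b ha hb => simpa [add_sub_add_comm] using add_mem ha hb
  | smul c a ha =>
    rw [map_smul, smul_eq_mul, map_mul, Algebra.smul_def, ← mul_sub]
    exact Ideal.mul_mem_left _ _ ha

theorem isUnit_of_isUnit_augmentation (p : ℕ) [Fact p.Prime] [CharP k p] [Finite G]
    (hG : IsPGroup p G) {u : k[G]} (hu : IsUnit (augmentation k G u)) : IsUnit u := by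
  obtain ⟨c, hc⟩ := hu
  have hv : algebraMap k k[G] ↑c⁻¹ * u - 1 ∈ Ring.jacobson k[G] := by
    have : algebraMap k k[G] ↑c⁻¹ * u - 1 =
        algebraMap k k[G] ↑c⁻¹ * (u - algebraMap k k[G] (augmentation k G u)) := by
      rw [← hc, mul_sub, ← map_mul, Units.inv_mul, map_one]
    exact this ▸ Ideal.mul_mem_left _ _ (sub_algebraMap_augmentation_mem_jacobson p hG u)
  have hu : u = algebraMap k k[G] ↑c * (algebraMap k k[G] ↑c⁻¹ * u) := by
    rw [← mul_assoc, ← map_mul, Units.mul_inv, map_one, one_mul]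
  exact hu ▸ (c.isUnit.map _).mul (isUnit_of_sub_one_mem_jacobson hv)

end Group

section DualLift

variable {k G M : Type*} [CommSemiring k] [Group G] [Fintype G] [AddCommMonoid M] [Module k M]
  [Module k[G] M] [IsScalarTower k k[G] M]

variable (G) in
noncomputable def dualLift (f : Module.Dual k M) : M →ₗ[k] k[G] :=
  ∑ g : G, lsingle g⁻¹ ∘ₗ f ∘ₗ GroupSMul.linearMap k M g

theorem dualLift_apply (f : Module.Dual k M) (y : M) :
    dualLift G f y = ∑ g : G, single g⁻¹ (f (single g (1 : k) • y)) := by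
  simp [dualLift]

theorem dualLift_single_smul (f : Module.Dual k M) (h : G) (y : M) :
    dualLift G f (single h (1 : k) • y) = single h (1 : k) • dualLift G f y := by
  rw [dualLift_apply, dualLift_apply, Finset.smul_sum]
  refine Fintype.sum_equiv (Equiv.mulRight h) _ _ fun g => ?_
  simp [smul_eq_mul, single_mul_single, ← mul_smul]

variable (G) in
noncomputable def dualLiftHom (f : Module.Dual k M) : M →ₗ[k[G]] k[G] :=
  equivariantOfLinearOfComm (dualLift G f) (dualLift_single_smul f)

theorem augmentation_dualLiftHom (f : Module.Dual k M) (y : M) :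
    augmentation k G (dualLiftHom G f y) = f (normElement k G • y) := by
  simp [dualLiftHom, dualLift_apply, normElement, Finset.sum_smul]

end DualLift

theorem normElement_smul_eq_zero_of_projectiveFree (p : ℕ) [Fact p.Prime] {k G M : Type}
    [Field k] [CharP k p] [Group G] [Fintype G] (hG : IsPGroup p G) [AddCommGroup M]
    [Module k[G] M] (hM : ProjectiveFree k[G] M) (x : M) : normElement k G • x = 0 := by
  let _ : Module k M := .compHom M (algebraMap k k[G])
  have : IsScalarTower k k[G] M := ⟨fun c a y => by
    change (c • a) • y = algebraMap k k[G] c • a • y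
    rw [Algebra.smul_def, mul_smul]⟩
  by_contra hx
  obtain ⟨f, hf⟩ : ∃ f : Module.Dual k M, f (normElement k G • x) ≠ 0 := by
    by_contra! h
    exact hx ((Module.forall_dual_apply_eq_zero_iff k _).1 h)
  have hunit : IsUnit (dualLiftHom G f x) := isUnit_of_isUnit_augmentation p hG <| by
    rw [augmentation_dualLiftHom]
    exact hf.isUnit
  exact hx (by rw [hM.eq_zero_of_isUnit_apply _ hunit, smul_zero])

end MonoidAlgebra

theorem stmt10_general (p : ℕ) [Fact p.Prime] (k : Type) [Field k] [CharP k p]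
    (G : Type) [Group G] [Fintype G] (hG : IsPGroup p G)
    (m : ℕ)
    (hm : radSeries (MonoidAlgebra k G) (MonoidAlgebra k G)
        (Ideal.jacobson (⊥ : Ideal (MonoidAlgebra k G))) m = ⊥)
    (M : Type) [AddCommGroup M] [Module (MonoidAlgebra k G) M]
    (hM : ProjectiveFree (MonoidAlgebra k G) M) :
    radSeries (MonoidAlgebra k G) M
      (Ideal.jacobson (⊥ : Ideal (MonoidAlgebra k G))) (m - 1) = ⊥ := by
  rw [Ideal.jacobson_bot] at hm ⊢
  obtain _ | n := m
  · exact absurd hm top_ne_bot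
  rw [Nat.add_sub_cancel, radSeries_eq_smul_top, eq_bot_iff, Submodule.smul_le]
  intro a ha y _
  rw [Submodule.mem_bot]
  have hfix (g : G) : of k G g * a = a := by
    have : (of k G g - 1) * a ∈ radSeries k[G] k[G] (Ring.jacobson k[G]) (n + 1) :=
      Submodule.subset_span ⟨_, of_sub_one_mem_jacobson p hG g, a, ha, rfl⟩
    rwa [hm, Submodule.mem_bot, sub_mul, one_mul, sub_eq_zero] at this
  rw [eq_coeff_one_smul_normElement hfix, Algebra.smul_def, mul_smul,
    normElement_smul_eq_zero_of_projectiveFree p hG hM, smul_zero]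

/-- if `m` is the nilpotency index of `J(kG)` (the least `m` with
`J(kG)^m = 0`), then `J(kG)^{m-1} M = 0` for every projective-free `kG`-module `M`. -/
theorem stmt10 (p : ℕ) [Fact p.Prime] (k : Type) [Field k] [CharP k p]
    (G : Type) [Group G] [Fintype G] (hG : IsPGroup p G)
    (m : ℕ)
    (hm : radSeries (MonoidAlgebra k G) (MonoidAlgebra k G)
        (Ideal.jacobson (⊥ : Ideal (MonoidAlgebra k G))) m = ⊥)
    (hmin : ∀ i < m, radSeries (MonoidAlgebra k G) (MonoidAlgebra k G)
        (Ideal.jacobson (⊥ : Ideal (MonoidAlgebra k G))) i ≠ ⊥)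
    (M : Type) [AddCommGroup M] [Module (MonoidAlgebra k G) M]
    (hM : ProjectiveFree (MonoidAlgebra k G) M) :
    radSeries (MonoidAlgebra k G) M
      (Ideal.jacobson (⊥ : Ideal (MonoidAlgebra k G))) (m - 1) = ⊥ :=
  stmt10_general p k G hG m hm M hM
end

section
/- Let G be a finite p-group, k a field of characteristic p, and suppose f : M → A and g : A → B are kG-module maps between finite-dimensional modules which are ghosts (induce zero on Hom_stable(Ω^i k, -) for all i). If M fits in a short exact sequence 0 → P → M → Q → 0 where P and Q are finite direct sums of modules of the form Ω̃^i k (Heller shifts of the trivial module), then the composite g∘f is stably trivial (factors through a projective). -/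
/-- The trivial representation: `k` with `G` acting trivially (via the augmentation). -/
def kTriv (k G : Type) : Type := k

instance (k G : Type) [Field k] [Group G] : AddCommGroup (kTriv k G) :=
  inferInstanceAs (AddCommGroup k)

noncomputable instance (k G : Type) [Field k] [Group G] :
    Module (MonoidAlgebra k G) (kTriv k G) :=
  Module.compHom k ((MonoidAlgebra.lift k k G) 1).toRingHom

/-- `K` is an `n`-th syzygy `Ω^n k` of the trivial module: there is an exact free
resolution `⋯ → F_1 → F_0 → k → 0` with `K ≅ ker (F_{n-1} → F_{n-2})`. -/
def IsSyzygyOfTrivial (k G : Type) [Field k] [Group G] (n : ℕ)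
    (K : Type) [AddCommGroup K] [Module (MonoidAlgebra k G) K] : Prop :=
  ∃ (r : ℕ → ℕ)
    (d : ∀ i : ℕ, (Fin (r (i+1)) → MonoidAlgebra k G) →ₗ[MonoidAlgebra k G]
        (Fin (r i) → MonoidAlgebra k G))
    (ε : (Fin (r 0) → MonoidAlgebra k G) →ₗ[MonoidAlgebra k G] kTriv k G),
    Function.Surjective ε ∧
    LinearMap.range (d 0) = LinearMap.ker ε ∧
    (∀ i, LinearMap.range (d (i+1)) = LinearMap.ker (d i)) ∧
    Nonempty (K ≃ₗ[MonoidAlgebra k G] LinearMap.ker (d (n-1)))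

/-- `K` is an `n`-th cosyzygy `Ω^{-n} k` of the trivial module: there is an exact free
resolution `⋯ → F_1 → F_0 → K → 0` whose `n`-th kernel is, up to a free summand,
the trivial module. -/
def IsCosyzygyOfTrivial (k G : Type) [Field k] [Group G] (n : ℕ)
    (K : Type) [AddCommGroup K] [Module (MonoidAlgebra k G) K] : Prop :=
  ∃ (r : ℕ → ℕ)
    (d : ∀ i : ℕ, (Fin (r (i+1)) → MonoidAlgebra k G) →ₗ[MonoidAlgebra k G]
        (Fin (r i) → MonoidAlgebra k G))
    (π : (Fin (r 0) → MonoidAlgebra k G) →ₗ[MonoidAlgebra k G] K) (s : ℕ),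
    Function.Surjective π ∧
    LinearMap.range (d 0) = LinearMap.ker π ∧
    (∀ i, LinearMap.range (d (i+1)) = LinearMap.ker (d i)) ∧
    Nonempty ((kTriv k G × (Fin s → MonoidAlgebra k G)) ≃ₗ[MonoidAlgebra k G]
      LinearMap.ker (d (n-1)))

/-- `K` is a representative of the suspension `Ω^d k` of the trivial module
in the stable module category. -/
def IsSuspensionOfTrivial (k G : Type) [Field k] [Group G] (d : ℤ)
    (K : Type) [AddCommGroup K] [Module (MonoidAlgebra k G) K] : Prop :=
  (d = 0 ∧ ∃ s : ℕ, Nonempty (K ≃ₗ[MonoidAlgebra k G]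
      (kTriv k G × (Fin s → MonoidAlgebra k G)))) ∨
  (∃ n : ℕ, 0 < n ∧ d = (n : ℤ) ∧ IsSyzygyOfTrivial k G n K) ∨
  (∃ n : ℕ, 0 < n ∧ d = -(n : ℤ) ∧ IsCosyzygyOfTrivial k G n K)

/-- `f` is a ghost: it induces the zero map on `Hom_stable(Ω^d k, -)` (equivalently on
Tate cohomology `Ĥ^{-d}(G,-)`) for all `d ∈ ℤ`. -/
def IsGhost (k G : Type) [Field k] [Group G] {M N : Type} [AddCommGroup M]
    [AddCommGroup N] [Module (MonoidAlgebra k G) M] [Module (MonoidAlgebra k G) N]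
    (f : M →ₗ[MonoidAlgebra k G] N) : Prop :=
  ∀ (d : ℤ) (K : Type) [AddCommGroup K] [Module (MonoidAlgebra k G) K],
    IsSuspensionOfTrivial k G d K →
      ∀ φ : K →ₗ[MonoidAlgebra k G] M, StablyTrivial (MonoidAlgebra k G) (f.comp φ)

/-- `f` is a dual ghost: it induces the zero map on `Hom_stable(-, Ω^d k)` for all `d`. -/
def IsDualGhost (k G : Type) [Field k] [Group G] {M N : Type} [AddCommGroup M]
    [AddCommGroup N] [Module (MonoidAlgebra k G) M] [Module (MonoidAlgebra k G) N]
    (f : M →ₗ[MonoidAlgebra k G] N) : Prop :=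
  ∀ (d : ℤ) (K : Type) [AddCommGroup K] [Module (MonoidAlgebra k G) K],
    IsSuspensionOfTrivial k G d K →
      ∀ ψ : N →ₗ[MonoidAlgebra k G] K, StablyTrivial (MonoidAlgebra k G) (ψ.comp f)

open MonoidAlgebra

namespace StablyTrivial

variable {A : Type} [Ring A] {M N P : Type} [AddCommGroup M] [AddCommGroup N]
  [AddCommGroup P] [Module A M] [Module A N] [Module A P]

theorem zero : StablyTrivial A (0 : M →ₗ[A] N) :=
  ⟨0, 0, 0, LinearMap.comp_zero 0⟩

theorem comp_right {f : M →ₗ[A] N} (hf : StablyTrivial A f) (v : P →ₗ[A] M) :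
    StablyTrivial A (f ∘ₗ v) := by
  obtain ⟨t, e, h, rfl⟩ := hf
  exact ⟨t, e ∘ₗ v, h, LinearMap.comp_assoc v e h⟩

theorem add {f₁ f₂ : M →ₗ[A] N} (hf₁ : StablyTrivial A f₁) (hf₂ : StablyTrivial A f₂) :
    StablyTrivial A (f₁ + f₂) := by
  obtain ⟨t₁, e₁, h₁, rfl⟩ := hf₁
  obtain ⟨t₂, e₂, h₂, rfl⟩ := hf₂
  let split : (Fin (t₁ + t₂) → A) ≃ₗ[A] (Fin t₁ → A) × (Fin t₂ → A) :=
    (LinearEquiv.funCongrLeft A A finSumFinEquiv).trans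
      (LinearEquiv.sumArrowLequivProdArrow _ _ A A)
  refine ⟨t₁ + t₂, split.symm.toLinearMap ∘ₗ e₁.prod e₂, h₁.coprod h₂ ∘ₗ split.toLinearMap, ?_⟩
  ext x
  simp

theorem sum {ι : Type} (s : Finset ι) (f : ι → M →ₗ[A] N)
    (hf : ∀ i ∈ s, StablyTrivial A (f i)) : StablyTrivial A (∑ i ∈ s, f i) :=
  Finset.sum_induction f (StablyTrivial A) (fun _ _ => add) zero hf

theorem of_comp_single {ι : Type} [Fintype ι] [DecidableEq ι] {K : ι → Type}
    [∀ i, AddCommGroup (K i)] [∀ i, Module A (K i)] (u : (∀ i, K i) →ₗ[A] N)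
    (hu : ∀ i, StablyTrivial A (u ∘ₗ LinearMap.single A K i)) : StablyTrivial A u := by
  have hsum : u = ∑ i, (u ∘ₗ LinearMap.single A K i) ∘ₗ LinearMap.proj i := by
    ext x
    simp only [LinearMap.sum_apply, LinearMap.comp_apply, LinearMap.proj_apply,
      LinearMap.coe_single]
    rw [← map_sum, Finset.univ_sum_single]
  rw [hsum]
  exact sum _ _ fun i _ => (hu i).comp_right _

end StablyTrivial

theorem IsGhost.stablyTrivial_comp_of_pi {k G : Type} [Field k] [Group G] {M N : Type}
    [AddCommGroup M] [AddCommGroup N] [Module k[G] M] [Module k[G] N] {f : M →ₗ[k[G]] N}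
    (hf : IsGhost k G f) {ι : Type} [Fintype ι] [DecidableEq ι] {K : ι → Type}
    [∀ i, AddCommGroup (K i)] [∀ i, Module k[G] (K i)] {d : ι → ℤ}
    (hK : ∀ i, IsSuspensionOfTrivial k G (d i) (K i)) (u : (∀ i, K i) →ₗ[k[G]] M) :
    StablyTrivial k[G] (f ∘ₗ u) :=
  StablyTrivial.of_comp_single _ fun i => by
    simpa only [LinearMap.comp_assoc] using hf (d i) (K i) (hK i) (u ∘ₗ LinearMap.single _ K i)

theorem LinearMap.exists_comp_eq_of_surjective {R M N Q : Type} [Ring R] [AddCommGroup M]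
    [AddCommGroup N] [AddCommGroup Q] [Module R M] [Module R N] [Module R Q]
    {π : M →ₗ[R] Q} (hπ : Function.Surjective π) {f : M →ₗ[R] N} (h : ker π ≤ ker f) :
    ∃ f' : Q →ₗ[R] N, f' ∘ₗ π = f :=
  ⟨(ker π).liftQ f h ∘ₗ (π.quotKerEquivOfSurjective hπ).symm.toLinearMap, by
    ext x
    simp⟩

namespace MonoidAlgebra

theorem linearMap_ext_coeff_one {k G M : Type} [Semiring k] [Group G] [AddCommMonoid M]
    [Module k[G] M] {φ ψ : M →ₗ[k[G]] k[G]} (h : ∀ x, (φ x).coeff 1 = (ψ x).coeff 1) :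
    φ = ψ := by
  have key (χ : M →ₗ[k[G]] k[G]) (x : M) (g : G) :
      (χ x).coeff g = (χ (single g⁻¹ (1 : k) • x)).coeff 1 := by
    rw [map_smul, smul_eq_mul, coeff_single_mul_apply, one_mul, inv_inv, mul_one]
  ext x : 1
  apply coeff_injective
  ext g
  rw [key φ, key ψ, h]

variable {k G M : Type} [Field k] [Group G] [Fintype G] [AddCommGroup M] [Module k[G] M]
  [Module k M] [IsScalarTower k k[G] M]

noncomputable def equivariantOfFunctional (β : M →ₗ[k] k) : M →ₗ[k[G]] k[G] :=
  equivariantOfLinearOfComm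
    (∑ g : G, (lsingle g : k →ₗ[k] k[G]) ∘ₗ β ∘ₗ GroupSMul.linearMap k M g⁻¹)
    fun h x => by
      simp only [LinearMap.sum_apply, LinearMap.comp_apply, GroupSMul.linearMap_apply,
        lsingle_apply, smul_eq_mul, Finset.mul_sum, single_mul_single, one_mul, smul_smul]
      refine Fintype.sum_bijective (h⁻¹ * ·) (Group.mulLeft_bijective h⁻¹) _ _ fun g => ?_
      simp only [mul_inv_cancel_left, mul_inv_rev, inv_inv]

theorem coeff_one_equivariantOfFunctional (β : M →ₗ[k] k) (x : M) :
    (equivariantOfFunctional (G := G) β x).coeff 1 = β x := by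
  classical
  simp [equivariantOfFunctional, coeff_sum, coeff_single, Finsupp.single_apply, ← one_def]

-- `k[G]` is self-injective: `e` is determined by the `k`-functional `coeff 1 ∘ e`, which
-- extends over `k`.
theorem exists_linearMap_comp_eq_of_injective {N : Type} [AddCommGroup N] [Module k[G] N]
    {ι : N →ₗ[k[G]] M} (hι : Function.Injective ι) (e : N →ₗ[k[G]] k[G]) :
    ∃ E : M →ₗ[k[G]] k[G], E ∘ₗ ι = e := by
  let ιInv := (LinearEquiv.ofInjective ι hι).symm
  let β₀ : (LinearMap.range ι).restrictScalars k →ₗ[k] k :=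
    Finsupp.lapply 1 ∘ₗ (coeffLinearEquiv k).toLinearMap ∘ₗ
      ((e ∘ₗ ιInv.toLinearMap).restrictScalars k ∘ₗ
        ((LinearMap.range ι).restrictScalarsEquiv k).toLinearMap.restrictScalars k)
  obtain ⟨β, hβ⟩ := LinearMap.exists_extend β₀
  refine ⟨equivariantOfFunctional β, linearMap_ext_coeff_one fun n => ?_⟩
  have hn : ιInv ⟨ι n, n, rfl⟩ = n := (LinearEquiv.ofInjective ι hι).symm_apply_apply n
  rw [LinearMap.comp_apply, coeff_one_equivariantOfFunctional]
  exact (LinearMap.congr_fun hβ _).trans (congr_arg (fun n => (e n).coeff 1) hn)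

theorem exists_linearMap_pi_comp_eq_of_injective {N I : Type} [AddCommGroup N] [Module k[G] N]
    {ι : N →ₗ[k[G]] M} (hι : Function.Injective ι) (e : N →ₗ[k[G]] I → k[G]) :
    ∃ E : M →ₗ[k[G]] I → k[G], E ∘ₗ ι = e := by
  choose E hE using fun i => exists_linearMap_comp_eq_of_injective hι (LinearMap.proj i ∘ₗ e)
  exact ⟨LinearMap.pi E, LinearMap.ext fun n => funext fun i => LinearMap.congr_fun (hE i) n⟩

end MonoidAlgebra

theorem stmt18_general (k : Type) [Field k]
    (G : Type) [Group G] [Fintype G]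
    (M A' B : Type) [AddCommGroup M] [AddCommGroup A'] [AddCommGroup B]
    [Module (MonoidAlgebra k G) M] [Module (MonoidAlgebra k G) A']
    [Module (MonoidAlgebra k G) B]
    [Module k M] [IsScalarTower k (MonoidAlgebra k G) M]
    (f : M →ₗ[MonoidAlgebra k G] A') (g : A' →ₗ[MonoidAlgebra k G] B)
    (hf : IsGhost k G f) (hg : IsGhost k G g)
    -- `P = Π i, K i` is a finite direct sum of suspensions of `k`
    (m : ℕ) (K : Fin m → Type) [∀ i, AddCommGroup (K i)]
    [∀ i, Module (MonoidAlgebra k G) (K i)] (dK : Fin m → ℤ)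
    (hK : ∀ i, IsSuspensionOfTrivial k G (dK i) (K i))
    -- `Q = Π j, L j` is a finite direct sum of suspensions of `k`
    (n : ℕ) (L : Fin n → Type) [∀ j, AddCommGroup (L j)]
    [∀ j, Module (MonoidAlgebra k G) (L j)] (dL : Fin n → ℤ)
    (hL : ∀ j, IsSuspensionOfTrivial k G (dL j) (L j))
    -- the short exact sequence `0 → P → M → Q → 0`
    (ι : (∀ i, K i) →ₗ[MonoidAlgebra k G] M)
    (π : M →ₗ[MonoidAlgebra k G] (∀ j, L j))
    (hι : Function.Injective ι) (hπ : Function.Surjective π)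
    (hexact : LinearMap.range ι = LinearMap.ker π) :
    StablyTrivial (MonoidAlgebra k G) (g.comp f) := by
  obtain ⟨t, e, h, he⟩ := hf.stablyTrivial_comp_of_pi hK ι
  obtain ⟨E, hE⟩ := exists_linearMap_pi_comp_eq_of_injective hι e
  have hker : LinearMap.ker π ≤ LinearMap.ker (f - h ∘ₗ E) := by
    rintro _ hx
    obtain ⟨x, rfl⟩ := hexact.ge hx
    rw [LinearMap.mem_ker, LinearMap.sub_apply, ← LinearMap.comp_apply, ← LinearMap.comp_apply,
      LinearMap.comp_assoc, hE, he, sub_self]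
  obtain ⟨f', hf'⟩ := LinearMap.exists_comp_eq_of_surjective hπ hker
  have hsplit : g ∘ₗ f = (g ∘ₗ f') ∘ₗ π + (g ∘ₗ h) ∘ₗ E := by
    rw [LinearMap.comp_assoc, hf', LinearMap.comp_assoc, ← LinearMap.comp_add, sub_add_cancel]
  rw [hsplit]
  exact ((hg.stablyTrivial_comp_of_pi hL f').comp_right π).add ⟨t, E, g ∘ₗ h, rfl⟩

/-- if `f : M → A'` and `g : A' → B` are ghosts between finite-dimensional
modules and `M` sits in a short exact sequence `0 → P → M → Q → 0` with `P` and `Q`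
finite direct sums of Heller shifts `Ω̃^{d} k` of the trivial module, then `g ∘ f` is
stably trivial. -/
theorem stmt18 (p : ℕ) [Fact p.Prime] (k : Type) [Field k] [CharP k p]
    (G : Type) [Group G] [Fintype G] (hG : IsPGroup p G)
    (M A' B : Type) [AddCommGroup M] [AddCommGroup A'] [AddCommGroup B]
    [Module (MonoidAlgebra k G) M] [Module (MonoidAlgebra k G) A']
    [Module (MonoidAlgebra k G) B]
    [Module k M] [IsScalarTower k (MonoidAlgebra k G) M] [FiniteDimensional k M]
    [Module k A'] [IsScalarTower k (MonoidAlgebra k G) A'] [FiniteDimensional k A']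
    [Module k B] [IsScalarTower k (MonoidAlgebra k G) B] [FiniteDimensional k B]
    (f : M →ₗ[MonoidAlgebra k G] A') (g : A' →ₗ[MonoidAlgebra k G] B)
    (hf : IsGhost k G f) (hg : IsGhost k G g)
    -- `P = Π i, K i` is a finite direct sum of suspensions of `k`
    (m : ℕ) (K : Fin m → Type) [∀ i, AddCommGroup (K i)]
    [∀ i, Module (MonoidAlgebra k G) (K i)] (dK : Fin m → ℤ)
    (hK : ∀ i, IsSuspensionOfTrivial k G (dK i) (K i))
    -- `Q = Π j, L j` is a finite direct sum of suspensions of `k`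
    (n : ℕ) (L : Fin n → Type) [∀ j, AddCommGroup (L j)]
    [∀ j, Module (MonoidAlgebra k G) (L j)] (dL : Fin n → ℤ)
    (hL : ∀ j, IsSuspensionOfTrivial k G (dL j) (L j))
    -- the short exact sequence `0 → P → M → Q → 0`
    (ι : (∀ i, K i) →ₗ[MonoidAlgebra k G] M)
    (π : M →ₗ[MonoidAlgebra k G] (∀ j, L j))
    (hι : Function.Injective ι) (hπ : Function.Surjective π)
    (hexact : LinearMap.range ι = LinearMap.ker π) :
    StablyTrivial (MonoidAlgebra k G) (g.comp f) :=
  stmt18_general k G M A' B f g hf hg m K dK hK n L dL hL ι π hι hπ hexact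
end

section
/- Let k be a field of characteristic 2 and G = C_2 ⊕ C_2 ⊕ ⋯ ⊕ C_2 an elementary abelian 2-group of rank l. Writing kG ≅ k[x_1,…,x_l]/(x_1^2,…,x_l^2), the element θ = x_1 x_2 ⋯ x_{l-1} (product of l-1 of the generators of the radical) acts stably non-trivially on the induced module k_H↑^G, where H is the subgroup generated by the last coordinate; i.e., multiplication by θ on k_H↑^G does not factor through a projective kG-module. -/
/-- The elementary abelian 2-group of rank `l`. -/
abbrev EAG (l : ℕ) : Type := Fin l → Multiplicative (ZMod 2)

/-- The `i`-th standard generator of `(C_2)^l`. -/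
def eagGen (l : ℕ) (i : Fin l) : EAG l := Pi.mulSingle i (Multiplicative.ofAdd 1)

open MonoidAlgebra

theorem StablyTrivial.eq_zero_of_smul_eq_zero {A M N : Type} [Ring A] [AddCommGroup M]
    [AddCommGroup N] [Module A M] [Module A N] {x : A}
    (hx : ∀ a : A, x * a = 0 → ∃ b, x * b = a)
    (hM : ∀ m : M, x • m = 0) (hN : ∀ n : N, x • n = 0) {f : M →ₗ[A] N}
    (hf : StablyTrivial A f) : f = 0 := by
  obtain ⟨t, g, h, rfl⟩ := hf
  ext m
  have hgm : x • g m = 0 := by rw [← map_smul, hM, map_zero]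
  choose w hw using fun i => hx (g m i) (congrFun hgm i)
  have : g m = x • w := funext fun i => (hw i).symm
  simp [this, hN]

theorem MonoidAlgebra.exists_of_sub_one_mul_eq_of_mul_eq_zero {k G : Type*} [Ring k] [CharP k 2]
    [Group G] (φ : G →* Multiplicative (ZMod 2)) {g : G} (hg : φ g ≠ 1) {a : MonoidAlgebra k G}
    (ha : (of k G g - 1) * a = 0) : ∃ b, (of k G g - 1) * b = a := by
  classical
  have hcoeff : ∀ (b : MonoidAlgebra k G) h,
      ((of k G g - 1) * b).coeff h = b.coeff (g⁻¹ * h) - b.coeff h := by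
    intro b h
    rw [sub_mul, one_mul, coeff_sub, Finsupp.sub_apply, of_apply, coeff_single_mul_apply,
      one_mul]
  have hφ : ∀ h, φ (g⁻¹ * h) = 1 ↔ φ h ≠ 1 := by
    intro h
    rw [map_mul, map_inv]
    generalize φ g = c at hg
    generalize φ h = d
    revert c d; decide
  have ha' : ∀ h, a.coeff (g⁻¹ * h) = a.coeff h := fun h =>
    sub_eq_zero.mp ((hcoeff a h).symm.trans (by rw [ha, coeff_zero, Finsupp.zero_apply]))
  -- `ker φ` meets each orbit `{h, g * h}` exactly once, so it serves as a transversal.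
  refine ⟨ofCoeff (a.coeff.filter fun h => φ h = 1), ?_⟩
  ext h
  rw [hcoeff, coeff_ofCoeff, Finsupp.filter_apply, Finsupp.filter_apply, ha']
  by_cases hh : φ h = 1
  · rw [if_neg ((hφ h).not.mpr (not_not.mpr hh)), if_pos hh, zero_sub, CharTwo.neg_eq]
  · rw [if_pos ((hφ h).mpr hh), if_neg hh, sub_zero]

theorem MonoidAlgebra.prod_of_sub_one {k G ι : Type*} [CommRing k] [CharP k 2] [CommMonoid G]
    (g : ι → G) (s : Finset ι) :
    ∏ i ∈ s, (of k G (g i) - 1) = ∑ t ∈ s.powerset, of k G (∏ i ∈ t, g i) := by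
  classical
  have hneg : (-1 : MonoidAlgebra k G) = 1 := by
    rw [← map_one (algebraMap k (MonoidAlgebra k G)), ← map_neg, CharTwo.neg_eq]
  simp_rw [sub_eq_add_neg, hneg, Finset.prod_add, Finset.prod_const_one, mul_one, map_prod]

theorem MonoidAlgebra.sum_single_one_ne_zero {k α ι : Type*} [Semiring k] [Nontrivial k]
    {f : ι → α} (hf : Function.Injective f) {s : Finset ι} (hs : s.Nonempty) :
    ∑ i ∈ s, single (f i) (1 : k) ≠ 0 := by
  classical
  obtain ⟨i, hi⟩ := hs
  intro h
  have := congrArg (fun x : MonoidAlgebra k α => x.coeff (f i)) h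
  simp [coeff_sum, coeff_single, Finsupp.single_apply, hf.eq_iff, hi] at this

section IndTriv
variable {k G : Type} [Field k] [Group G] {H : Subgroup G}

variable (k H) in
noncomputable def IndTriv.equiv : IndTriv k G H ≃+ MonoidAlgebra k (G ⧸ H) :=
  (Representation.ofMulAction k G (G ⧸ H)).asModuleEquiv.toAddEquiv

theorem IndTriv.equiv_smul (a : MonoidAlgebra k G) (m : IndTriv k G H) :
    IndTriv.equiv k H (a • m) =
      (Representation.ofMulAction k G (G ⧸ H)).asAlgebraHom a (IndTriv.equiv k H m) :=
  Representation.asModuleEquiv_map_smul _ a m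

theorem IndTriv.of_smul [H.Normal] {g : G} (hg : g ∈ H) (m : IndTriv k G H) :
    of k G g • m = m := by
  apply (IndTriv.equiv k H).injective
  rw [IndTriv.equiv_smul, Representation.asAlgebraHom_of]
  ext q
  have hq : g⁻¹ • q = q := by
    induction q using QuotientGroup.induction_on with
    | H x => rw [MulAction.Quotient.smul_coe, smul_eq_mul, QuotientGroup.mk_mul,
        (QuotientGroup.eq_one_iff _).mpr (H.inv_mem hg), one_mul]
  rw [Representation.coeff_ofMulAction, hq]

theorem IndTriv.of_sub_one_smul [H.Normal] {g : G} (hg : g ∈ H) (m : IndTriv k G H) :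
    (of k G g - 1) • m = 0 := by
  rw [sub_smul, one_smul, IndTriv.of_smul hg, sub_self]

variable (k H) in
noncomputable def IndTriv.single (q : G ⧸ H) : IndTriv k G H :=
  (IndTriv.equiv k H).symm (MonoidAlgebra.single q 1)

theorem IndTriv.equiv_single (q : G ⧸ H) :
    IndTriv.equiv k H (IndTriv.single k H q) = MonoidAlgebra.single q 1 :=
  AddEquiv.apply_symm_apply _ _

theorem IndTriv.of_smul_single (g : G) (q : G ⧸ H) :
    of k G g • IndTriv.single k H q = IndTriv.single k H (g • q) := by
  apply (IndTriv.equiv k H).injective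
  rw [IndTriv.equiv_smul, IndTriv.equiv_single, IndTriv.equiv_single,
    Representation.asAlgebraHom_of, Representation.ofMulAction_single]

theorem IndTriv.prod_of_sub_one_smul_single_one {G : Type} [CommGroup G] {H : Subgroup G}
    [CharP k 2] {ι : Type*} (g : ι → G) (s : Finset ι) :
    (∏ i ∈ s, (of k G (g i) - 1)) • IndTriv.single k H ((1 : G) : G ⧸ H) =
      ∑ t ∈ s.powerset, IndTriv.single k H ((∏ i ∈ t, g i : G) : G ⧸ H) := by
  simp_rw [prod_of_sub_one, Finset.sum_smul, IndTriv.of_smul_single,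
    MulAction.Quotient.smul_coe, smul_eq_mul, mul_one]

theorem IndTriv.sum_single_ne_zero {ι : Type*} {f : ι → G ⧸ H} (hf : Function.Injective f)
    {s : Finset ι} (hs : s.Nonempty) : ∑ i ∈ s, IndTriv.single k H (f i) ≠ 0 := by
  rw [← (IndTriv.equiv k H).map_ne_zero_iff, map_sum]
  simp_rw [IndTriv.equiv_single]
  exact sum_single_one_ne_zero hf hs

end IndTriv

section EAG
variable {l : ℕ}

theorem prod_eagGen_apply_eq_one_iff {κ : Type*} {e : κ → Fin l} (he : Function.Injective e)
    (S : Finset κ) (j : κ) : (∏ i ∈ S, eagGen l (e i)) (e j) = 1 ↔ j ∉ S := by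
  classical
  simp [Finset.prod_apply, eagGen, Pi.mulSingle_apply, he.eq_iff]

theorem eag_apply_eq_of_mk_eq {i j : Fin l} (hij : i ≠ j) {a b : EAG l}
    (h : (a : EAG l ⧸ Subgroup.zpowers (eagGen l j)) = b) : a i = b i := by
  have hle : Subgroup.zpowers (eagGen l j) ≤ (Pi.evalMonoidHom _ i).ker :=
    Subgroup.zpowers_le.mpr (Pi.mulSingle_eq_of_ne hij _)
  have := hle (QuotientGroup.eq.mp h)
  rwa [MonoidHom.mem_ker, Pi.evalMonoidHom_apply, Pi.mul_apply, Pi.inv_apply,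
    inv_mul_eq_one] at this

theorem mk_prod_eagGen_castLE_injective (hl : 0 < l) :
    Function.Injective fun S : Finset (Fin (l - 1)) =>
      ((∏ i ∈ S, eagGen l (Fin.castLE (Nat.sub_le l 1) i) : EAG l) :
        EAG l ⧸ Subgroup.zpowers (eagGen l ⟨l - 1, Nat.sub_lt hl one_pos⟩)) := by
  intro S T h
  ext j
  have hj : Fin.castLE (Nat.sub_le l 1) j ≠ ⟨l - 1, Nat.sub_lt hl one_pos⟩ :=
    Fin.ne_of_val_ne j.isLt.ne
  rw [← not_iff_not, ← prod_eagGen_apply_eq_one_iff (Fin.castLE_injective (Nat.sub_le l 1)),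
    ← prod_eagGen_apply_eq_one_iff (Fin.castLE_injective (Nat.sub_le l 1)),
    eag_apply_eq_of_mk_eq hj h]

end EAG

/-- for `G = (C_2)^l` with `kG ≅ k[x_1,…,x_l]/(x_i^2)`, the element
`θ = x_1 ⋯ x_{l-1}` acts stably non-trivially on `k_H↑^G`, where `H` is generated by
the last coordinate. -/
theorem stmt19 (k : Type) [Field k] [CharP k 2] (l : ℕ) (hl : 0 < l) :
    ¬ StablyTrivial (MonoidAlgebra k (EAG l))
        (mulBy (MonoidAlgebra k (EAG l))
          (IndTriv k (EAG l) (Subgroup.zpowers (eagGen l ⟨l - 1, Nat.sub_lt hl one_pos⟩)))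
          (∏ i : Fin (l - 1),
            (MonoidAlgebra.of k (EAG l) (eagGen l (Fin.castLE (Nat.sub_le l 1) i)) - 1))
          (fun b => mul_comm _ b)) := by
  set gH := eagGen l ⟨l - 1, Nat.sub_lt hl one_pos⟩
  intro hθ
  have hgH : Pi.evalMonoidHom _ ⟨l - 1, Nat.sub_lt hl one_pos⟩ gH ≠ 1 := by
    simp [gH, eagGen]
  have hzero := hθ.eq_zero_of_smul_eq_zero
    (fun _ => exists_of_sub_one_mul_eq_of_mul_eq_zero _ hgH)
    (IndTriv.of_sub_one_smul (Subgroup.mem_zpowers gH))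
    (IndTriv.of_sub_one_smul (Subgroup.mem_zpowers gH))
  apply IndTriv.sum_single_ne_zero (k := k) (mk_prod_eagGen_castLE_injective hl)
    ⟨Finset.univ, Finset.mem_powerset_self _⟩
  rw [← IndTriv.prod_of_sub_one_smul_single_one]
  exact LinearMap.congr_fun hzero _
end
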